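/- arXiv:2305.10742 — 2 statements merged into one kernel-verified Lean document; each statement's English description precedes it below -/
import Mathlib

section
/- Let 1/2 ≤ λ < 1, ν = 1 − λ, 0 < δ < 1, and k a nonnegative integer. Define z*(k,δ,λ) as the smallest integer z ≥ k with B_{z,k}(ν) ≤ δ. Then z*(k,δ,λ) ≤ (k + 2λ ln(1/δ) + √(2λ k ln(1/δ)))/ν + 1. -/
/-- Binomial cumulative distribution function B_{z,k}(p). -/
noncomputable def binCDF (z k : ℕ) (p : ℝ) : ℝ :=
  ∑ j ∈ Finset.range (k + 1), (z.choose j : ℝ) * p ^ j * (1 - p) ^ (z - j)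

/-- z*(k,δ,λ): the smallest integer z ≥ k with B_{z,k}(1-λ) ≤ δ. -/
noncomputable def zStar (k : ℕ) (δ lam : ℝ) : ℕ :=
  sInf {z : ℕ | k ≤ z ∧ binCDF z k (1 - lam) ≤ δ}

/-!
Chernoff's method: for `X ~ Bin(z, ν)` and `t ≥ 0`, `P(X ≤ k) ≤ e^{tk} E[e^{-tX}]`. Because
`ν ≤ 1/2`, the Padé bound `e^{-t} ≥ (2 - t)/(2 + t)` yields, by comparing derivatives,
`log (λ + ν e^{-t}) ≤ -νt + νλt²/2` for `t ≥ 0`. The optimal `t = (μ - k)/(μλ)` with `μ = zν`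
then gives `B_{z,k}(ν) ≤ exp (-(μ - k)² / (2μλ))`, which is at most `δ` as soon as
`μ ≥ k + 2λ log(1/δ) + √(2λk log(1/δ))`; the least such integer `z` exceeds the bound by less
than one.
-/

open Real

lemma two_sub_le_two_add_mul_exp_neg {t : ℝ} (ht : 0 ≤ t) : 2 - t ≤ (2 + t) * exp (-t) := by
  have hderiv : ∀ x : ℝ, HasDerivAt (fun y => (2 + y) * exp (-y) + y)
      (1 - (1 + x) * exp (-x)) x := fun x => by
    have := ((((hasDerivAt_id x).const_add 2).mul (hasDerivAt_neg x).exp).add (hasDerivAt_id x))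
    exact this.congr_deriv (by simp only [id]; ring)
  have hmono := monotone_of_hasDerivAt_nonneg hderiv fun x => by
    have h := mul_le_mul_of_nonneg_right (add_one_le_exp x) (exp_pos (-x)).le
    rw [← exp_add, add_neg_cancel, exp_zero, add_comm] at h
    simpa using h
  simpa using hmono ht

lemma one_sub_exp_neg_le_mul {p t : ℝ} (hp : p ≤ 1 / 2) (ht : 0 ≤ t) :
    1 - exp (-t) ≤ t * (1 - p + p * exp (-t)) := by
  have hpade := two_sub_le_two_add_mul_exp_neg ht
  have hexp_le : exp (-t) ≤ 1 := exp_le_one_iff.2 (neg_nonpos.2 ht)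
  nlinarith [mul_nonneg (mul_nonneg ht (sub_nonneg.2 hexp_le)) (by linarith : 0 ≤ 1 / 2 - p)]

lemma one_sub_add_mul_exp_neg_le_exp {p t : ℝ} (hp0 : 0 ≤ p) (hp : p ≤ 1 / 2) (ht : 0 ≤ t) :
    1 - p + p * exp (-t) ≤ exp (-(p * t) + p * (1 - p) * t ^ 2 / 2) := by
  set D : ℝ → ℝ := fun x => 1 - p + p * exp (-x)
  have hD : ∀ x, 0 < D x := fun x => by
    have := mul_nonneg hp0 (exp_pos (-x)).le
    simp only [D]
    linarith
  have hderiv : ∀ x, HasDerivAt (fun y => -(p * y) + p * (1 - p) * y ^ 2 / 2 - log (D y))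
      (p * (1 - p) * (x * D x - (1 - exp (-x))) / D x) x := fun x => by
    have hDx : HasDerivAt D (p * (-exp (-x))) x :=
      (((hasDerivAt_neg x).exp).const_mul p).const_add (1 - p) |>.congr_deriv (by ring)
    have := ((((hasDerivAt_id x).const_mul p).neg).add
      (((hasDerivAt_pow 2 x).const_mul (p * (1 - p))).div_const 2)).sub (hDx.log (hD x).ne')
    refine this.congr_deriv ?_
    field_simp [(hD x).ne']
    simp only [D]
    ring
  have hmono : MonotoneOn (fun y => -(p * y) + p * (1 - p) * y ^ 2 / 2 - log (D y))
      (Set.Ici 0) := by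
    refine monotoneOn_of_hasDerivWithinAt_nonneg (convex_Ici 0)
      (fun x _ => (hderiv x).continuousAt.continuousWithinAt)
      (fun x _ => (hderiv x).hasDerivWithinAt) fun x hx => ?_
    rw [interior_Ici] at hx
    have hpade := one_sub_exp_neg_le_mul hp hx.le
    have hvar : 0 ≤ p * (1 - p) := mul_nonneg hp0 (by linarith)
    exact div_nonneg (mul_nonneg hvar (by linarith)) (hD x).le
  have h := hmono Set.self_mem_Ici ht ht
  simp only [D, mul_zero, neg_zero, exp_zero, zero_pow two_ne_zero, zero_div, add_zero,
    mul_one, sub_add_cancel, log_one, sub_zero] at h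
  rw [← log_le_iff_le_exp (hD t)]
  linarith

lemma binCDF_le_exp_mul_pow {z k : ℕ} {p t : ℝ} (hk : k ≤ z) (hp0 : 0 ≤ p) (hp1 : p ≤ 1)
    (ht : 0 ≤ t) : binCDF z k p ≤ exp (t * k) * (1 - p + p * exp (-t)) ^ z := by
  set b : ℕ → ℝ := fun j => z.choose j * p ^ j * (1 - p) ^ (z - j)
  have hb : ∀ j, 0 ≤ b j := fun j => by
    have : 0 ≤ 1 - p := by linarith
    positivity
  calc binCDF z k p
      ≤ ∑ j ∈ Finset.range (k + 1), exp (t * (k - j)) * b j := by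
        refine Finset.sum_le_sum fun j hj => le_mul_of_one_le_left (hb j) (one_le_exp ?_)
        have : (j : ℝ) ≤ k := by exact_mod_cast Finset.mem_range_succ_iff.mp hj
        nlinarith
    _ ≤ ∑ j ∈ Finset.range (z + 1), exp (t * (k - j)) * b j :=
        Finset.sum_le_sum_of_subset_of_nonneg (Finset.range_subset_range.2 (by omega))
          fun j _ _ => mul_nonneg (exp_pos _).le (hb j)
    _ = exp (t * k) * (p * exp (-t) + (1 - p)) ^ z := by
        rw [add_pow, Finset.mul_sum]
        refine Finset.sum_congr rfl fun j _ => ?_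
        rw [show t * (k - j) = t * k + j * (-t) by ring, exp_add, exp_nat_mul, mul_pow]
        ring
    _ = exp (t * k) * (1 - p + p * exp (-t)) ^ z := by rw [add_comm (p * _)]

lemma binCDF_le_exp_neg_sq_div {z k : ℕ} {p : ℝ} (hp0 : 0 < p) (hp : p ≤ 1 / 2) (hz : 0 < z)
    (hk : (k : ℝ) ≤ z * p) :
    binCDF z k p ≤ exp (-((z * p - k) ^ 2 / (2 * (z * p) * (1 - p)))) := by
  have hμ : 0 < (z : ℝ) * p := mul_pos (by exact_mod_cast hz) hp0
  have hq : 0 < 1 - p := by linarith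
  have hkz : k ≤ z := by
    have : (z : ℝ) * p ≤ z := mul_le_of_le_one_right (Nat.cast_nonneg z) (by linarith)
    exact_mod_cast hk.trans this
  -- the minimiser of `t k - μ t + μ (1 - p) t² / 2`, with `μ = z p`
  set t := (z * p - k) / (z * p * (1 - p))
  have ht : 0 ≤ t := div_nonneg (by linarith) (by positivity)
  have hbase : 0 ≤ 1 - p + p * exp (-t) := by positivity
  calc binCDF z k p
      ≤ exp (t * k) * (1 - p + p * exp (-t)) ^ z :=
        binCDF_le_exp_mul_pow hkz hp0.le (by linarith) ht
    _ ≤ exp (t * k) * exp (-(p * t) + p * (1 - p) * t ^ 2 / 2) ^ z := by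
        gcongr
        exact one_sub_add_mul_exp_neg_le_exp hp0.le hp ht
    _ = exp (t * k + z * (-(p * t) + p * (1 - p) * t ^ 2 / 2)) := by
        rw [← exp_nat_mul, ← exp_add]
    _ = exp (-((z * p - k) ^ 2 / (2 * (z * p) * (1 - p)))) := by
        congr 1
        simp only [t]
        field_simp
        ring

lemma mul_add_le_sq_of_add_sqrt_le {a b c : ℝ} (hb : 0 ≤ b) (hc : 0 ≤ c) (h : b + √c ≤ a) :
    b * a + c ≤ a ^ 2 := by
  have hs := sqrt_nonneg c
  nlinarith [sq_sqrt hc, mul_le_mul (by linarith : √c ≤ a) (by linarith : √c ≤ a - b) hs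
    (by linarith)]

lemma binCDF_le_exp_neg_of_add_sqrt_le {z k : ℕ} {lam L : ℝ} (hlam0 : 1 / 2 ≤ lam)
    (hlam1 : lam < 1) (hL : 0 ≤ L) (hz : 0 < z)
    (h : k + 2 * lam * L + √(2 * lam * k * L) ≤ z * (1 - lam)) :
    binCDF z k (1 - lam) ≤ exp (-L) := by
  have hν : 0 < 1 - lam := by linarith
  have hgap : 2 * lam * L + √(2 * lam * k * L) ≤ z * (1 - lam) - k := by linarith
  have hk : (k : ℝ) ≤ z * (1 - lam) := by
    have : 0 ≤ 2 * lam * L + √(2 * lam * k * L) := by positivity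
    linarith
  have hsq := mul_add_le_sq_of_add_sqrt_le (by positivity) (by positivity) hgap
  have hμ : 0 < z * (1 - lam) := mul_pos (by exact_mod_cast hz) hν
  have hchernoff := binCDF_le_exp_neg_sq_div hν (by linarith) hz hk
  rw [sub_sub_cancel] at hchernoff
  refine hchernoff.trans (exp_le_exp.2 (neg_le_neg ((le_div_iff₀ ?_).2 (by linarith))))
  exact mul_pos (mul_pos two_pos hμ) (by linarith)

theorem stmt_7 (lam δ : ℝ) (k : ℕ) (hlam0 : 1 / 2 ≤ lam) (hlam1 : lam < 1)
    (hδ0 : 0 < δ) (hδ1 : δ < 1) :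
    (zStar k δ lam : ℝ) ≤
      ((k : ℝ) + 2 * lam * Real.log (1 / δ) + Real.sqrt (2 * lam * k * Real.log (1 / δ)))
        / (1 - lam) + 1 := by
  set L := log (1 / δ)
  have hL : 0 < L := log_pos (one_lt_one_div hδ0 hδ1)
  have hν : 0 < 1 - lam := by linarith
  set x := ((k : ℝ) + 2 * lam * L + √(2 * lam * k * L)) / (1 - lam)
  have hx : 0 < x := div_pos (by positivity) hν
  set z := ⌈x⌉₊
  have hμ : (k : ℝ) + 2 * lam * L + √(2 * lam * k * L) ≤ z * (1 - lam) :=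
    (div_le_iff₀ hν).1 (Nat.le_ceil x)
  have hkz : (k : ℝ) ≤ z := by nlinarith [sqrt_nonneg (2 * lam * k * L), hL]
  have hbin : binCDF z k (1 - lam) ≤ δ := by
    simpa [L, exp_log hδ0] using
      binCDF_le_exp_neg_of_add_sqrt_le hlam0 hlam1 hL.le (Nat.ceil_pos.2 hx) hμ
  have hzStar : zStar k δ lam ≤ z := Nat.sInf_le ⟨by exact_mod_cast hkz, hbin⟩
  calc (zStar k δ lam : ℝ) ≤ z := by exact_mod_cast hzStar
    _ ≤ x + 1 := (Nat.ceil_lt_add_one hx.le).le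
end

section
/- Fix 0 < r < 1 and define ζ(r,p) := p · [D(β(r,p) ‖ p)]^{−1}, where β(r,p) := ln((1−p)/(1−rp)) / (ln r + ln((1−p)/(1−rp))) and D is the binary relative entropy. Then ζ(r,p) is strictly decreasing in p on (0,1). -/
/-- Binary relative entropy. -/
noncomputable def binRelEnt (p q : ℝ) : ℝ :=
  p * Real.log (p / q) + (1 - p) * Real.log ((1 - p) / (1 - q))

/-- The function β(r,p). -/
noncomputable def betaFn (r p : ℝ) : ℝ :=
  Real.log ((1 - p) / (1 - r * p)) / (Real.log r + Real.log ((1 - p) / (1 - r * p)))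

/-!
`D(β ‖ p)` is the Chernoff information of `Bernoulli p` and `Bernoulli (r p)`: `β` is the point
where `D(· ‖ p)` and `D(· ‖ r p)` agree, hence `D(β ‖ p) = max_w -log Z_w(p)` with
`Z_w(p) = p ^ w (r p) ^ (1 - w) + (1 - p) ^ w (1 - r p) ^ (1 - w)`, the maximum being attained at
the `w` whose tilted distribution is `Bernoulli β`. For fixed `w ∈ (0, 1)` the map
`p ↦ -log Z_w(p) / p` is strictly increasing: for `p₁ = t p₂` the pair of Bernoulli laws at `p₁`
is the `t`-mixture of `(δ₀, δ₀)` and the pair at `p₂`, so strict joint concavity of `Z_w` (Hölder)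
and AM-GM give `Z_w(p₁) > 1 - t + t Z_w(p₂) ≥ Z_w(p₂) ^ t`. Taking `w` optimal for `p₁` yields
`ζ(p₁) = p₁ / (-log Z_w(p₁)) > p₂ / (-log Z_w(p₂)) ≥ ζ(p₂)`.
-/

open Real Set

lemma mul_log_div_le_sub {x y : ℝ} (hx : 0 < x) (hy : 0 < y) : x * log (y / x) ≤ y - x :=
  calc x * log (y / x) ≤ x * (y / x - 1) :=
        mul_le_mul_of_nonneg_left (log_le_sub_one_of_pos (div_pos hy hx)) hx.le
    _ = y - x := by field_simp

lemma mul_log_div_lt_sub {x y : ℝ} (hx : 0 < x) (hy : 0 < y) (hxy : x ≠ y) :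
    x * log (y / x) < y - x :=
  calc x * log (y / x) < x * (y / x - 1) := by
        refine mul_lt_mul_of_pos_left (log_lt_sub_one_of_pos (div_pos hy hx) ?_) hx
        rwa [ne_eq, div_eq_one_iff_eq hx.ne', eq_comm]
    _ = y - x := by field_simp

lemma binRelEnt_nonneg {x y : ℝ} (hx0 : 0 < x) (hx1 : x < 1) (hy0 : 0 < y) (hy1 : y < 1) :
    0 ≤ binRelEnt x y := by
  have h₁ := mul_log_div_le_sub hx0 hy0
  have h₂ := mul_log_div_le_sub (sub_pos.2 hx1) (sub_pos.2 hy1)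
  have hrev : ∀ a b : ℝ, log (a / b) = -log (b / a) := fun a b => by rw [← log_inv, inv_div]
  rw [binRelEnt, hrev x, hrev (1 - x)]
  linarith

lemma binRelEnt_self (x : ℝ) : binRelEnt x x = 0 := by
  rcases eq_or_ne x 0 with rfl | hx0
  · simp [binRelEnt]
  rcases eq_or_ne x 1 with rfl | hx1
  · simp [binRelEnt]
  rw [binRelEnt, div_self hx0, div_self (sub_ne_zero.2 (Ne.symm hx1))]
  simp

lemma binRelEnt_eq_sub_log {x y : ℝ} (hx0 : 0 < x) (hx1 : x < 1) (hy0 : 0 < y) (hy1 : y < 1) :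
    binRelEnt x y = x * log x + (1 - x) * log (1 - x) - x * log y - (1 - x) * log (1 - y) := by
  rw [binRelEnt, log_div hx0.ne' hy0.ne', log_div (by linarith) (by linarith)]
  ring

lemma rpow_mul_rpow_one_sub_self {t : ℝ} (ht : 0 < t) (w : ℝ) : t ^ w * t ^ (1 - w) = t := by
  rw [← rpow_add ht, add_sub_cancel, rpow_one]

lemma rpow_mul_rpow_add_rpow_mul_rpow_lt {a₁ a₂ b₁ b₂ w : ℝ} (ha₁ : 0 < a₁) (ha₂ : 0 < a₂)
    (hb₁ : 0 < b₁) (hb₂ : 0 < b₂) (hw0 : 0 < w) (hw1 : w < 1) (hne : a₁ * b₂ ≠ a₂ * b₁) :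
    a₁ ^ w * b₁ ^ (1 - w) + a₂ ^ w * b₂ ^ (1 - w) < (a₁ + a₂) ^ w * (b₁ + b₂) ^ (1 - w) := by
  set A := a₁ + a₂
  set B := b₁ + b₂
  have hA : 0 < A := by positivity
  have hB : 0 < B := by positivity
  have hw : w + (1 - w) = 1 := by ring
  have h₁ := geom_mean_le_arith_mean2_weighted hw0.le (sub_pos.2 hw1).le
    (div_pos ha₁ hA).le (div_pos hb₁ hB).le hw
  have h₂ : (a₂ / A) ^ w * (b₂ / B) ^ (1 - w) < w * (a₂ / A) + (1 - w) * (b₂ / B) := by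
    refine (geom_mean_lt_arith_mean2_weighted_iff_of_pos hw0 (sub_pos.2 hw1)
      (div_pos ha₂ hA).le (div_pos hb₂ hB).le hw).2 fun h => hne ?_
    rw [div_eq_div_iff hA.ne' hB.ne'] at h
    linear_combination -h
  have hnorm : ∀ a b : ℝ, 0 < a → 0 < b →
      (a / A) ^ w * (b / B) ^ (1 - w) = a ^ w * b ^ (1 - w) / (A ^ w * B ^ (1 - w)) :=
    fun a b ha hb => by rw [div_rpow ha.le hA.le, div_rpow hb.le hB.le]; ring
  have hsum : w * (a₁ / A) + (1 - w) * (b₁ / B) + (w * (a₂ / A) + (1 - w) * (b₂ / B)) = 1 := by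
    field_simp; ring
  rw [hnorm a₁ b₁ ha₁ hb₁] at h₁
  rw [hnorm a₂ b₂ ha₂ hb₂] at h₂
  rw [← div_lt_one (by positivity), add_div]
  linarith

/-- `∑ₓ P(x) ^ w * Q(x) ^ (1 - w)` for `P = Bernoulli p`, `Q = Bernoulli q`. -/
noncomputable def chernoffCoeff (w p q : ℝ) : ℝ :=
  p ^ w * q ^ (1 - w) + (1 - p) ^ w * (1 - q) ^ (1 - w)

/-- The success probability of the tilted law `P ^ w * Q ^ (1 - w) / chernoffCoeff w p q`. -/
noncomputable def chernoffTilt (w p q : ℝ) : ℝ :=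
  p ^ w * q ^ (1 - w) / chernoffCoeff w p q

section Chernoff

variable {w p q : ℝ}

lemma chernoffCoeff_pos (hp0 : 0 < p) (hp1 : p < 1) (hq0 : 0 < q) (hq1 : q < 1) :
    0 < chernoffCoeff w p q := by
  have := sub_pos.2 hp1
  have := sub_pos.2 hq1
  unfold chernoffCoeff
  positivity

lemma chernoffCoeff_lt_one (hw0 : 0 < w) (hw1 : w < 1) (hp0 : 0 < p) (hp1 : p < 1)
    (hq0 : 0 < q) (hq1 : q < 1) (hpq : p ≠ q) : chernoffCoeff w p q < 1 := by
  have h := rpow_mul_rpow_add_rpow_mul_rpow_lt hp0 (sub_pos.2 hp1) hq0 (sub_pos.2 hq1) hw0 hw1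
    (by contrapose! hpq; linear_combination hpq)
  simpa [chernoffCoeff] using h

lemma add_mul_chernoffCoeff_lt {t : ℝ} (ht0 : 0 < t) (ht1 : t < 1) (hw0 : 0 < w) (hw1 : w < 1)
    (hp0 : 0 < p) (hp1 : p < 1) (hq0 : 0 < q) (hq1 : q < 1) (hpq : p ≠ q) :
    1 - t + t * chernoffCoeff w p q < chernoffCoeff w (t * p) (t * q) := by
  have h1t := sub_pos.2 ht1
  have hne : (1 - t) * (t * (1 - q)) ≠ t * (1 - p) * (1 - t) := fun h => hpq <| by
    have : t * (1 - t) * (p - q) = 0 := by linear_combination h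
    exact sub_eq_zero.1 ((mul_eq_zero.1 this).resolve_left (by positivity))
  have h := rpow_mul_rpow_add_rpow_mul_rpow_lt h1t (mul_pos ht0 (sub_pos.2 hp1)) h1t
    (mul_pos ht0 (sub_pos.2 hq1)) hw0 hw1 hne
  have hmul : ∀ a b : ℝ, 0 ≤ a → 0 ≤ b →
      (t * a) ^ w * (t * b) ^ (1 - w) = t * (a ^ w * b ^ (1 - w)) := fun a b ha hb => by
    rw [mul_rpow ht0.le ha, mul_rpow ht0.le hb, mul_mul_mul_comm, rpow_mul_rpow_one_sub_self ht0]
  rw [rpow_mul_rpow_one_sub_self h1t, hmul _ _ (sub_pos.2 hp1).le (sub_pos.2 hq1).le,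
    show 1 - t + t * (1 - p) = 1 - t * p by ring, show 1 - t + t * (1 - q) = 1 - t * q by ring] at h
  rw [chernoffCoeff, chernoffCoeff, hmul _ _ hp0.le hq0.le]
  linarith

lemma neg_log_chernoffCoeff_mul_lt {t : ℝ} (ht0 : 0 < t) (ht1 : t < 1) (hw0 : 0 < w)
    (hw1 : w < 1) (hp0 : 0 < p) (hp1 : p < 1) (hq0 : 0 < q) (hq1 : q < 1) (hpq : p ≠ q) :
    -log (chernoffCoeff w (t * p) (t * q)) < t * -log (chernoffCoeff w p q) := by
  have hZ := chernoffCoeff_pos (w := w) hp0 hp1 hq0 hq1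
  have hamgm : chernoffCoeff w p q ^ t ≤ 1 - t + t * chernoffCoeff w p q := by
    simpa using geom_mean_le_arith_mean2_weighted (sub_pos.2 ht1).le ht0.le zero_le_one hZ.le
      (sub_add_cancel 1 t)
  have hlt := (hamgm.trans_lt (add_mul_chernoffCoeff_lt ht0 ht1 hw0 hw1 hp0 hp1 hq0 hq1 hpq))
  have := log_lt_log (by positivity) hlt
  rw [log_rpow hZ] at this
  linarith

lemma one_sub_chernoffTilt (hp0 : 0 < p) (hp1 : p < 1) (hq0 : 0 < q) (hq1 : q < 1) :
    1 - chernoffTilt w p q = (1 - p) ^ w * (1 - q) ^ (1 - w) / chernoffCoeff w p q := by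
  rw [chernoffTilt, eq_div_iff (chernoffCoeff_pos hp0 hp1 hq0 hq1).ne', sub_mul,
    div_mul_cancel₀ _ (chernoffCoeff_pos hp0 hp1 hq0 hq1).ne', chernoffCoeff]
  ring

lemma chernoffTilt_mem_Ioo (hp0 : 0 < p) (hp1 : p < 1) (hq0 : 0 < q) (hq1 : q < 1) :
    chernoffTilt w p q ∈ Ioo 0 1 := by
  have hZ := chernoffCoeff_pos (w := w) hp0 hp1 hq0 hq1
  have h1 := one_sub_chernoffTilt (w := w) hp0 hp1 hq0 hq1
  have := sub_pos.2 hp1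
  have := sub_pos.2 hq1
  refine ⟨by unfold chernoffTilt; positivity, sub_pos.1 ?_⟩
  rw [h1]
  positivity

lemma mul_binRelEnt_add_mul_binRelEnt {x : ℝ} (hx0 : 0 < x) (hx1 : x < 1) (hp0 : 0 < p)
    (hp1 : p < 1) (hq0 : 0 < q) (hq1 : q < 1) :
    w * binRelEnt x p + (1 - w) * binRelEnt x q =
      binRelEnt x (chernoffTilt w p q) - log (chernoffCoeff w p q) := by
  have hZ := chernoffCoeff_pos (w := w) hp0 hp1 hq0 hq1
  obtain ⟨ht0, ht1⟩ := chernoffTilt_mem_Ioo (w := w) hp0 hp1 hq0 hq1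
  have h1p := sub_pos.2 hp1
  have h1q := sub_pos.2 hq1
  have hlogt :
      log (chernoffTilt w p q) = w * log p + (1 - w) * log q - log (chernoffCoeff w p q) := by
    rw [chernoffTilt, log_div (by positivity) hZ.ne', log_mul (by positivity) (by positivity),
      log_rpow hp0, log_rpow hq0]
  have hlog1t : log (1 - chernoffTilt w p q) =
      w * log (1 - p) + (1 - w) * log (1 - q) - log (chernoffCoeff w p q) := by
    rw [one_sub_chernoffTilt hp0 hp1 hq0 hq1, log_div (by positivity) hZ.ne',
      log_mul (by positivity) (by positivity), log_rpow h1p, log_rpow h1q]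
  rw [binRelEnt_eq_sub_log hx0 hx1 hp0 hp1, binRelEnt_eq_sub_log hx0 hx1 hq0 hq1,
    binRelEnt_eq_sub_log hx0 hx1 ht0 ht1, hlogt, hlog1t]
  ring

lemma neg_log_chernoffCoeff_le_binRelEnt {x : ℝ} (hx0 : 0 < x) (hx1 : x < 1) (hp0 : 0 < p)
    (hp1 : p < 1) (hq0 : 0 < q) (hq1 : q < 1) (hx : binRelEnt x p = binRelEnt x q) (w : ℝ) :
    -log (chernoffCoeff w p q) ≤ binRelEnt x p := by
  obtain ⟨ht0, ht1⟩ := chernoffTilt_mem_Ioo (w := w) hp0 hp1 hq0 hq1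
  have := mul_binRelEnt_add_mul_binRelEnt (w := w) hx0 hx1 hp0 hp1 hq0 hq1
  rw [← hx] at this
  linarith [binRelEnt_nonneg hx0 hx1 ht0 ht1]

lemma continuous_chernoffTilt (hp0 : 0 < p) (hp1 : p < 1) (hq0 : 0 < q) (hq1 : q < 1) :
    Continuous fun w => chernoffTilt w p q := by
  have := sub_pos.2 hp1
  have := sub_pos.2 hq1
  exact Continuous.div (by fun_prop (disch := positivity))
    (by unfold chernoffCoeff; fun_prop (disch := positivity))
    fun w => (chernoffCoeff_pos hp0 hp1 hq0 hq1).ne'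

lemma exists_chernoffTilt_eq {x : ℝ} (hp1 : p < 1) (hq0 : 0 < q) (hqx : q < x) (hxp : x < p) :
    ∃ w ∈ Ioo (0 : ℝ) 1, chernoffTilt w p q = x := by
  have hp0 := hq0.trans (hqx.trans hxp)
  have hq1 := (hqx.trans hxp).trans hp1
  have h := intermediate_value_Ioo zero_le_one
    (continuous_chernoffTilt hp0 hp1 hq0 hq1).continuousOn
  simp only [chernoffTilt, chernoffCoeff, rpow_zero, rpow_one, sub_zero, sub_self] at h
  exact h ⟨by simpa using hqx, by simpa using hxp⟩

lemma exists_binRelEnt_eq_neg_log_chernoffCoeff {x : ℝ} (hp1 : p < 1) (hq0 : 0 < q)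
    (hqx : q < x) (hxp : x < p) (hx : binRelEnt x p = binRelEnt x q) :
    ∃ w ∈ Ioo (0 : ℝ) 1, binRelEnt x p = -log (chernoffCoeff w p q) := by
  obtain ⟨w, hw, htilt⟩ := exists_chernoffTilt_eq hp1 hq0 hqx hxp
  refine ⟨w, hw, ?_⟩
  have := mul_binRelEnt_add_mul_binRelEnt (w := w) (hq0.trans hqx) (hxp.trans hp1)
    (hq0.trans (hqx.trans hxp)) hp1 hq0 ((hqx.trans hxp).trans hp1)
  rw [← hx, htilt, binRelEnt_self] at this
  linarith

end Chernoff

section betaFn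

variable {r p : ℝ}

lemma log_add_log_div_neg (hr0 : 0 < r) (hr1 : r < 1) (hp0 : 0 < p) (hp1 : p < 1) :
    log r + log ((1 - p) / (1 - r * p)) < 0 := by
  have h1rp : 0 < 1 - r * p := by nlinarith
  have hL := log_neg (div_pos (sub_pos.2 hp1) h1rp) ((div_lt_one h1rp).2 (by nlinarith))
  linarith [log_neg hr0 hr1]

lemma betaFn_mem_Ioo (hr0 : 0 < r) (hr1 : r < 1) (hp0 : 0 < p) (hp1 : p < 1) :
    betaFn r p ∈ Ioo (r * p) p := by
  have h1p := sub_pos.2 hp1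
  have h1rp : 0 < 1 - r * p := by nlinarith
  have hden := log_add_log_div_neg hr0 hr1 hp0 hp1
  have ha : log r < r - 1 := log_lt_sub_one_of_pos hr0 hr1.ne
  have ha' : r * -log r < 1 - r := by
    simpa [log_inv] using mul_log_div_lt_sub hr0 one_pos hr1.ne
  have h₁ := mul_log_div_le_sub h1p h1rp
  have h₂ := mul_log_div_le_sub h1rp h1p
  rw [← neg_neg (log ((1 - r * p) / (1 - p))), ← log_inv, inv_div] at h₁
  constructor
  · rw [betaFn, lt_div_iff_of_neg hden]
    nlinarith
  · rw [betaFn, div_lt_iff_of_neg hden]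
    nlinarith

lemma binRelEnt_betaFn_eq (hr0 : 0 < r) (hr1 : r < 1) (hp0 : 0 < p) (hp1 : p < 1) :
    binRelEnt (betaFn r p) p = binRelEnt (betaFn r p) (r * p) := by
  obtain ⟨hrpb, hbp⟩ := betaFn_mem_Ioo hr0 hr1 hp0 hp1
  have hrp : 0 < r * p := by positivity
  have hb : betaFn r p * log r = (1 - betaFn r p) * log ((1 - p) / (1 - r * p)) := by
    rw [betaFn, one_sub_div (log_add_log_div_neg hr0 hr1 hp0 hp1).ne]
    ring
  rw [log_div (by linarith) (by nlinarith)] at hb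
  rw [binRelEnt_eq_sub_log (hrp.trans hrpb) (hbp.trans hp1) hp0 hp1,
    binRelEnt_eq_sub_log (hrp.trans hrpb) (hbp.trans hp1) hrp (by nlinarith),
    log_mul hr0.ne' hp0.ne']
  linear_combination hb

lemma exists_binRelEnt_betaFn_eq_neg_log (hr0 : 0 < r) (hr1 : r < 1) (hp0 : 0 < p)
    (hp1 : p < 1) :
    ∃ w ∈ Ioo (0 : ℝ) 1, binRelEnt (betaFn r p) p = -log (chernoffCoeff w p (r * p)) :=
  exists_binRelEnt_eq_neg_log_chernoffCoeff hp1 (by positivity)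
    (betaFn_mem_Ioo hr0 hr1 hp0 hp1).1 (betaFn_mem_Ioo hr0 hr1 hp0 hp1).2
    (binRelEnt_betaFn_eq hr0 hr1 hp0 hp1)

lemma neg_log_chernoffCoeff_le_binRelEnt_betaFn (hr0 : 0 < r) (hr1 : r < 1) (hp0 : 0 < p)
    (hp1 : p < 1) (w : ℝ) :
    -log (chernoffCoeff w p (r * p)) ≤ binRelEnt (betaFn r p) p := by
  obtain ⟨hrpb, hbp⟩ := betaFn_mem_Ioo hr0 hr1 hp0 hp1
  exact neg_log_chernoffCoeff_le_binRelEnt ((mul_pos hr0 hp0).trans hrpb) (hbp.trans hp1) hp0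
    hp1 (by positivity) (by nlinarith) (binRelEnt_betaFn_eq hr0 hr1 hp0 hp1) w

end betaFn

theorem stmt_18 (r : ℝ) (hr0 : 0 < r) (hr1 : r < 1) :
    StrictAntiOn (fun p : ℝ => p / binRelEnt (betaFn r p) p) (Set.Ioo 0 1) := by
  rintro p₁ ⟨hp₁0, hp₁1⟩ p₂ ⟨hp₂0, hp₂1⟩ hp
  obtain ⟨w, ⟨hw0, hw1⟩, hD₁⟩ := exists_binRelEnt_betaFn_eq_neg_log hr0 hr1 hp₁0 hp₁1
  have hD₂ := neg_log_chernoffCoeff_le_binRelEnt_betaFn hr0 hr1 hp₂0 hp₂1 w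
  have hscale : p₁ / p₂ * p₂ = p₁ := div_mul_cancel₀ _ hp₂0.ne'
  have hmono := neg_log_chernoffCoeff_mul_lt (div_pos hp₁0 hp₂0) ((div_lt_one hp₂0).2 hp) hw0
    hw1 hp₂0 hp₂1 (mul_pos hr0 hp₂0) (by nlinarith) (by nlinarith)
  rw [hscale, mul_left_comm, hscale, ← hD₁] at hmono
  have hD₁pos : 0 < binRelEnt (betaFn r p₁) p₁ := hD₁ ▸ neg_pos.2 (log_neg
    (chernoffCoeff_pos hp₁0 hp₁1 (by positivity) (by nlinarith))
    (chernoffCoeff_lt_one hw0 hw1 hp₁0 hp₁1 (by positivity) (by nlinarith) (by nlinarith)))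
  have hD₂pos : 0 < binRelEnt (betaFn r p₂) p₂ := by
    nlinarith [div_pos hp₁0 hp₂0]
  show p₂ / _ < p₁ / _
  rw [div_lt_div_iff₀ hD₂pos hD₁pos]
  calc p₂ * binRelEnt (betaFn r p₁) p₁
      < p₂ * (p₁ / p₂ * -log (chernoffCoeff w p₂ (r * p₂))) := by gcongr
    _ = p₁ * -log (chernoffCoeff w p₂ (r * p₂)) := by field_simp
    _ ≤ p₁ * binRelEnt (betaFn r p₂) p₂ := by gcongr
end
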